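/- arXiv:1702.08696 — 4 statements merged into one kernel-verified Lean document; each statement's English description precedes it below -/
import Mathlib

section
/- Let X be a quasi-semicategory, A ⊆ X a semisimplicial subset equipped with a simplicial structure, and s₀ : X₀ → X₁ a function extending the degree-0 degeneracy of A and such that each s₀(x) is an idempotent equivalence from x to x. Then for every N ≥ 0, any (N−1)-good system (s₀, …, s_{N−1}) on (X, A, s₀) extends to an almost N-good system (s₀, …, s_N). -/
universe u

/-! # Semisimplicial sets, combinatorially

A semisimplicial set is given by sets `X n` (`n ≥ 0`) together with face maps
`δ n i : X (n+1) → X n` (meaningful for `i ≤ n+1`) satisfying the semisimplicial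
identity `d_i d_k = d_{k-1} d_i` for `i < k`.  (For `i > n+1` the value of
`δ n i` is junk and is never constrained nor used.) -/
structure SemiSSet : Type (u + 1) where
  obj : ℕ → Type u
  δ : (n : ℕ) → ℕ → obj (n + 1) → obj n
  δ_comp : ∀ (n i k : ℕ), i < k → k ≤ n + 2 → ∀ x : obj (n + 2),
    δ n i (δ (n + 1) k x) = δ n (k - 1) (δ (n + 1) i x)

namespace SemiSSet

variable (X : SemiSSet.{u})

/-- The compatibility condition making a family of would-be faces
`(x_j)_{j ≤ n+1, j ≠ i}` (of `n`-simplices) into a horn `Λ^{n+1}_i → X`: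
`d_j x_k = d_{k-1} x_j` for `j < k` (vacuous if `n = 0`). -/
def HornCompat : (n i : ℕ) → ((j : ℕ) → j ≤ n + 1 → j ≠ i → X.obj n) → Prop
  | 0, _, _ => True
  | (m + 1), i, face =>
      ∀ (j k : ℕ) (hjk : j < k) (hk : k ≤ m + 2) (hj' : j ≠ i) (hk' : k ≠ i),
        X.δ m j (face k hk hk') = X.δ m (k - 1) (face j (by omega) hj')

/-- A map `Λ^{n+1}_i → X` from the `(n+1, i)`-horn, described by its faces. -/
structure Horn (n i : ℕ) : Type u where
  face : (j : ℕ) → j ≤ n + 1 → j ≠ i → X.obj n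
  compat : X.HornCompat n i face

/-- `x` is a filler of the horn `h`, i.e. an extension to `Δ^{n+1}`. -/
def IsFiller {n i : ℕ} (h : X.Horn n i) (x : X.obj (n + 1)) : Prop :=
  ∀ (j : ℕ) (hj : j ≤ n + 1) (hij : j ≠ i), X.δ n j x = h.face j hj hij

/-- The Kan condition: every horn `Λ^{n}_i → X` (`n ≥ 1`, `0 ≤ i ≤ n`) has a filler. -/
def KanCondition : Prop :=
  ∀ (n i : ℕ), i ≤ n + 1 → ∀ h : X.Horn n i, ∃ x, X.IsFiller h x

/-- The weak Kan condition: every inner horn `Λ^{n}_i → X` (`0 < i < n`) has a filler. -/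
def IsQuasiSemicategory : Prop :=
  ∀ (n i : ℕ), 0 < i → i < n + 1 → ∀ h : X.Horn n i, ∃ x, X.IsFiller h x

/-- The last edge (spanned by the last two vertices) of an `(n+1)`-simplex. -/
def lastEdge : (n : ℕ) → X.obj (n + 1) → X.obj 1
  | 0, x => x
  | (n + 1), x => lastEdge n (X.δ (n + 1) 0 x)

/-- The first edge (spanned by the first two vertices) of an `(n+1)`-simplex. -/
def firstEdge : (n : ℕ) → X.obj (n + 1) → X.obj 1
  | 0, x => x
  | (n + 1), x => firstEdge n (X.δ (n + 1) (n + 2) x)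

/-- The last edge of a horn `Λ^{m+2}_{m+2} → X` (computed in its `0`-th face). -/
def Horn.lastEdge {m : ℕ} (h : X.Horn (m + 1) (m + 2)) : X.obj 1 :=
  X.lastEdge m (h.face 0 (by omega) (by omega))

/-- The first edge of a horn `Λ^{m+2}_0 → X` (computed in its last face). -/
def Horn.firstEdge {m : ℕ} (h : X.Horn (m + 1) 0) : X.obj 1 :=
  X.firstEdge m (h.face (m + 2) (by omega) (by omega))

/-- `f` is cartesian: any horn `Λ^n_n → X` (`n ≥ 2`) whose last edge is `f` has a filler. -/
def IsCartesian (f : X.obj 1) : Prop :=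
  ∀ (m : ℕ) (h : X.Horn (m + 1) (m + 2)), h.lastEdge = f → ∃ x, X.IsFiller h x

/-- `f` is cocartesian: any horn `Λ^n_0 → X` (`n ≥ 2`) whose first edge is `f` has a filler. -/
def IsCocartesian (f : X.obj 1) : Prop :=
  ∀ (m : ℕ) (h : X.Horn (m + 1) 0), h.firstEdge = f → ∃ x, X.IsFiller h x

/-- `f` is an equivalence iff it is both cartesian and cocartesian. -/
def IsEquivalence (f : X.obj 1) : Prop := X.IsCartesian f ∧ X.IsCocartesian f

/-- `f` is idempotent: `f ∘ f ≃ f`, i.e. there is a `2`-simplex all whose faces are `f`. -/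
def IsIdempotent (f : X.obj 1) : Prop :=
  ∃ σ : X.obj 2, X.δ 1 0 σ = f ∧ X.δ 1 1 σ = f ∧ X.δ 1 2 σ = f

/-- A simplicial structure on a semisimplicial set: degeneracy maps
`s k : X n → X (n+1)` (`k ≤ n`; junk values for `k > n` are unconstrained)
satisfying the simplicial identities.  This makes `X` the underlying
semisimplicial set of a simplicial set. -/
structure SimplicialStructure (X : SemiSSet.{u}) : Type u where
  s : (n : ℕ) → ℕ → X.obj n → X.obj (n + 1)
  δs_lt : ∀ (m i k : ℕ), i < k → k ≤ m + 1 → ∀ x : X.obj (m + 1),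
    X.δ (m + 1) i (s (m + 1) k x) = s m (k - 1) (X.δ m i x)
  δs_self : ∀ (n k : ℕ), k ≤ n → ∀ x : X.obj n, X.δ n k (s n k x) = x
  δs_succ : ∀ (n k : ℕ), k ≤ n → ∀ x : X.obj n, X.δ n (k + 1) (s n k x) = x
  δs_gt : ∀ (m i k : ℕ), k + 1 < i → i ≤ m + 2 → ∀ x : X.obj (m + 1),
    X.δ (m + 1) i (s (m + 1) k x) = s m k (X.δ m (i - 1) x)
  ss : ∀ (n i k : ℕ), i ≤ k → k ≤ n → ∀ x : X.obj n,
    s (n + 1) i (s n k x) = s (n + 1) (k + 1) (s n i x)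

/-- A morphism of semisimplicial sets. -/
structure Hom (X Y : SemiSSet.{u}) : Type u where
  app : (n : ℕ) → X.obj n → Y.obj n
  naturality : ∀ (n i : ℕ), i ≤ n + 1 → ∀ x : X.obj (n + 1),
    app n (X.δ n i x) = Y.δ n i (app (n + 1) x)

variable {X : SemiSSet.{u}} {Y : SemiSSet.{u}}

/-- `p : X → Y` is an inner fibration: any lifting problem of an inner horn of `X`
against a simplex of `Y` has a solution. -/
def Hom.IsInnerFibration (p : Hom X Y) : Prop :=
  ∀ (n i : ℕ), 0 < i → i < n + 1 → ∀ (h : X.Horn n i) (y : Y.obj (n + 1)),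
    (∀ (j : ℕ) (hj : j ≤ n + 1) (hij : j ≠ i),
        p.app n (h.face j hj hij) = Y.δ n j y) →
    ∃ x : X.obj (n + 1), X.IsFiller h x ∧ p.app (n + 1) x = y

/-- `p : X → Y` is a Kan fibration: any horn lifting problem (`n ≥ 1`, `0 ≤ i ≤ n`)
against a simplex of `Y` has a solution. -/
def Hom.IsKanFibration (p : Hom X Y) : Prop :=
  ∀ (n i : ℕ), i ≤ n + 1 → ∀ (h : X.Horn n i) (y : Y.obj (n + 1)),
    (∀ (j : ℕ) (hj : j ≤ n + 1) (hij : j ≠ i),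
        p.app n (h.face j hj hij) = Y.δ n j y) →
    ∃ x : X.obj (n + 1), X.IsFiller h x ∧ p.app (n + 1) x = y

/-- An edge `a` of `X` is `p`-cartesian: every lifting problem of a horn
`Λ^n_n → X` (`i = n ≥ 2`) with last edge `a` against a simplex of `Y` has a solution. -/
def Hom.IsPCartesian (p : Hom X Y) (a : X.obj 1) : Prop :=
  ∀ (m : ℕ) (h : X.Horn (m + 1) (m + 2)) (y : Y.obj (m + 2)),
    h.lastEdge = a →
    (∀ (j : ℕ) (hj : j ≤ m + 2) (hij : j ≠ m + 2),
        p.app (m + 1) (h.face j hj hij) = Y.δ (m + 1) j y) →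
    ∃ x : X.obj (m + 2), X.IsFiller h x ∧ p.app (m + 2) x = y

/-- An edge `a` of `X` is `p`-cocartesian: every lifting problem of a horn
`Λ^n_0 → X` (`n ≥ 2`) with first edge `a` against a simplex of `Y` has a solution. -/
def Hom.IsPCocartesian (p : Hom X Y) (a : X.obj 1) : Prop :=
  ∀ (m : ℕ) (h : X.Horn (m + 1) 0) (y : Y.obj (m + 2)),
    h.firstEdge = a →
    (∀ (j : ℕ) (hj : j ≤ m + 2) (hij : j ≠ 0),
        p.app (m + 1) (h.face j hj hij) = Y.δ (m + 1) j y) →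
    ∃ x : X.obj (m + 2), X.IsFiller h x ∧ p.app (m + 2) x = y

/-- The edge `f : x → x` is `p`-idempotent (`Y` carrying a simplicial structure `SY`):
there is a `2`-simplex, all whose faces are `f`, lying over the doubly degenerate
`2`-simplex `s₀ s₀ (p x)` of `Y`. -/
def Hom.IsPIdempotent (p : Hom X Y) (SY : SimplicialStructure Y)
    (f : X.obj 1) (x : X.obj 0) : Prop :=
  X.δ 0 0 f = x ∧ X.δ 0 1 f = x ∧
    ∃ σ : X.obj 2, X.δ 1 0 σ = f ∧ X.δ 1 1 σ = f ∧ X.δ 1 2 σ = f ∧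
      p.app 2 σ = SY.s 1 0 (SY.s 0 0 (p.app 0 x))

end SemiSSet
section GoodSystems

open SemiSSet

variable {X A : SemiSSet.{u}} (f : Hom A X) (SA : SimplicialStructure A)
  (s0 : X.obj 0 → X.obj 1)

/-- An *almost `N`-good system* on `(X, A, s₀)`: a family of maps
`s k : X n → X (n+1)` (meaningful for `k ≤ min (n, N)`; values outside that
range are junk and unconstrained) which satisfies the simplicial identities
whenever they apply — except that `d_{N+1} s_N = id` is not required —,
restricts to the degeneracies of `A`, and is `s₀` in degree `0`. -/
def AlmostGoodSystem (N : ℕ) (s : (n : ℕ) → ℕ → X.obj n → X.obj (n + 1)) : Prop :=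
  (∀ x : X.obj 0, s 0 0 x = s0 x) ∧
  (∀ (n k : ℕ), k ≤ n → k ≤ N → ∀ a : A.obj n,
    s n k (f.app n a) = f.app (n + 1) (SA.s n k a)) ∧
  (∀ (m i k : ℕ), i < k → k ≤ m + 1 → k ≤ N → ∀ x : X.obj (m + 1),
    X.δ (m + 1) i (s (m + 1) k x) = s m (k - 1) (X.δ m i x)) ∧
  (∀ (n k : ℕ), k ≤ n → k ≤ N → ∀ x : X.obj n, X.δ n k (s n k x) = x) ∧
  (∀ (n k : ℕ), k ≤ n → k < N → ∀ x : X.obj n, X.δ n (k + 1) (s n k x) = x) ∧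
  (∀ (m i k : ℕ), k + 1 < i → i ≤ m + 2 → k ≤ N → ∀ x : X.obj (m + 1),
    X.δ (m + 1) i (s (m + 1) k x) = s m k (X.δ m (i - 1) x)) ∧
  (∀ (n i k : ℕ), i ≤ k → k ≤ n → k + 1 ≤ N → ∀ x : X.obj n,
    s (n + 1) i (s n k x) = s (n + 1) (k + 1) (s n i x))

/-- An *`N`-good system*: an almost `N`-good system which moreover satisfies the
remaining simplicial identity `d_{N+1} s_N = id`. -/
def GoodSystem (N : ℕ) (s : (n : ℕ) → ℕ → X.obj n → X.obj (n + 1)) : Prop :=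
  AlmostGoodSystem f SA s0 N s ∧
    ∀ n : ℕ, N ≤ n → ∀ x : X.obj n, X.δ n (N + 1) (s n N x) = x

/-- An *(N−1)-good system* (where `N ≥ 0`): for `N = 0` this is the empty system
(no condition), and for `N = M + 1` it is an `M`-good system. -/
def GoodSystemBelow : (N : ℕ) → ((n : ℕ) → ℕ → X.obj n → X.obj (n + 1)) → Prop
  | 0, _ => True
  | (M + 1), s => GoodSystem f SA s0 M s

end GoodSystems

section Construction

open SemiSSet

attribute [local instance] Classical.propDecidable

variable {X A : SemiSSet.{u}}

/-- The candidate new degeneracy `s_N`, defined by recursion on the degree: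
on the image of `A` it is forced by `A`'s degeneracies, on degenerate simplices
it is forced by the simplicial identity `s_i s_{N-1} = s_N s_i`, and otherwise
it is a choice of horn filler (whose existence is proved separately). -/
noncomputable def tf (f : Hom A X) (SA : SimplicialStructure A) (s0 : X.obj 0 → X.obj 1)
    (N : ℕ) (s : (n : ℕ) → ℕ → X.obj n → X.obj (n + 1)) :
    (n : ℕ) → X.obj n → X.obj (n + 1)
  | 0, y => if N = 0 then s0 y else s 0 N y
  | (n+1), y =>
    if hA : ∃ a, f.app (n+1) a = y then f.app (n+2) (SA.s (n+1) N hA.choose)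
    else if hD : ∃ i, ∃ z : X.obj n, i + 1 ≤ N ∧ s n i z = y then
      s (n+1) hD.choose (s n (N-1) hD.choose_spec.choose)
    else if hF : ∃ x : X.obj (n+2),
        (∀ p, p < N → X.δ (n+1) p x = s n (N-1) (X.δ n p y)) ∧
        X.δ (n+1) N x = y ∧
        (∀ p, N+1 < p → p ≤ n+2 → X.δ (n+1) p x = tf f SA s0 N s n (X.δ n (p-1) y))
      then hF.choose else s (n+1) N y

variable {f : Hom A X} {SA : SimplicialStructure A} {s0 : X.obj 0 → X.obj 1} {N : ℕ}
  {s : (n : ℕ) → ℕ → X.obj n → X.obj (n + 1)}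

/-- Well-definedness of the value of `s_N` on degenerate simplices. -/
theorem sN_welldef
    (H3 : ∀ (m i k : ℕ), i < k → k ≤ m + 1 → k + 1 ≤ N → ∀ x : X.obj (m + 1),
      X.δ (m + 1) i (s (m + 1) k x) = s m (k - 1) (X.δ m i x))
    (H4 : ∀ (n k : ℕ), k ≤ n → k + 1 ≤ N → ∀ x : X.obj n, X.δ n k (s n k x) = x)
    (H5 : ∀ (n k : ℕ), k ≤ n → k + 1 ≤ N → ∀ x : X.obj n, X.δ n (k + 1) (s n k x) = x)
    (H6 : ∀ (m i k : ℕ), k + 1 < i → i ≤ m + 2 → k + 1 ≤ N → ∀ x : X.obj (m + 1),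
      X.δ (m + 1) i (s (m + 1) k x) = s m k (X.δ m (i - 1) x))
    (H7 : ∀ (n i k : ℕ), i ≤ k → k ≤ n → k + 2 ≤ N → ∀ x : X.obj n,
      s (n + 1) i (s n k x) = s (n + 1) (k + 1) (s n i x))
    {n : ℕ} (hn : N ≤ n + 1) :
    ∀ i j (z w : X.obj n), i + 1 ≤ N → j + 1 ≤ N → s n i z = s n j w →
      s (n+1) i (s n (N-1) z) = s (n+1) j (s n (N-1) w) := by
  suffices aux : ∀ i j (z w : X.obj n), i ≤ j → i + 1 ≤ N → j + 1 ≤ N → s n i z = s n j w →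
      s (n+1) i (s n (N-1) z) = s (n+1) j (s n (N-1) w) by
    intro i j z w hi hj hzw
    rcases le_total i j with h | h
    · exact aux i j z w h hi hj hzw
    · exact (aux j i w z h hj hi hzw.symm).symm
  intro i j z w hij hi hj hzw
  rcases eq_or_lt_of_le hij with rfl | hlt
  · -- equal indices: the interiors agree
    have hz : z = w := by
      have h1 : X.δ n i (s n i z) = z := H4 n i (by omega) hi z
      have h2 : X.δ n i (s n i w) = w := H4 n i (by omega) hi w
      rw [← h1, ← h2, hzw]
    rw [hz]
  · -- `i < j`
    obtain ⟨l, rfl⟩ : ∃ l, n = l + 1 := ⟨n - 1, by omega⟩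
    obtain ⟨j', rfl⟩ : ∃ j', j = j' + 1 := ⟨j - 1, by omega⟩
    obtain ⟨K, hN⟩ : ∃ K, N = K + 2 := ⟨N - 2, by omega⟩
    subst hN
    have hij' : i ≤ j' := by omega
    have hw : w = s l i (X.δ l (j'+1) z) := by
      have h1 : X.δ (l+1) (j'+1+1) (s (l+1) (j'+1) w) = w :=
        H5 (l+1) (j'+1) (by omega) (by omega) w
      have h2 : X.δ (l+1) (j'+2) (s (l+1) i z) = s l i (X.δ l (j'+2-1) z) :=
        H6 l (j'+2) i (by omega) (by omega) (by omega) z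
      simp only [show j'+2-1 = j'+1 from rfl] at h2
      rw [← h1, ← hzw]
      exact h2
    have hu : X.δ l i w = X.δ l (j'+1) z := by
      rw [hw]; exact H4 l i (by omega) (by omega) _
    have hz : z = s l j' (X.δ l i w) := by
      have h1 : X.δ (l+1) i (s (l+1) i z) = z := H4 (l+1) i (by omega) (by omega) z
      have h2 : X.δ (l+1) i (s (l+1) (j'+1) w) = s l (j'+1-1) (X.δ l i w) :=
        H3 l i (j'+1) (by omega) (by omega) (by omega) w
      simp only [show j'+1-1 = j' from rfl] at h2
      rw [← h1, hzw]
      exact h2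
    have hsw : s l i (X.δ l i w) = w := by rw [hu, ← hw]
    simp only [show K+2-1 = K+1 from rfl]
    calc s (l+2) i (s (l+1) (K+1) z)
        = s (l+2) i (s (l+1) (K+1) (s l j' (X.δ l i w))) := by rw [← hz]
      _ = s (l+2) i (s (l+1) j' (s l K (X.δ l i w))) := by
            rw [H7 l j' K (by omega) (by omega) (by omega)]
      _ = s (l+2) (j'+1) (s (l+1) i (s l K (X.δ l i w))) := by
            rw [H7 (l+1) i j' (by omega) (by omega) (by omega)]
      _ = s (l+2) (j'+1) (s (l+1) (K+1) (s l i (X.δ l i w))) := by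
            rw [H7 l i K (by omega) (by omega) (by omega)]
      _ = s (l+2) (j'+1) (s (l+1) (K+1) w) := by rw [hsw]

/-- The last edge of a top degenerate simplex is an `s0`-edge. -/
theorem lastEdge_s
    (H1 : N ≠ 0 → ∀ x : X.obj 0, s 0 0 x = s0 x)
    (H3 : ∀ (m i k : ℕ), i < k → k ≤ m + 1 → k + 1 ≤ N → ∀ x : X.obj (m + 1),
      X.δ (m + 1) i (s (m + 1) k x) = s m (k - 1) (X.δ m i x)) :
    ∀ k, k + 1 ≤ N → ∀ w : X.obj k, ∃ v, X.lastEdge k (s k k w) = s0 v := by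
  intro k
  induction k with
  | zero =>
    intro h w
    exact ⟨w, by simp only [SemiSSet.lastEdge]; exact H1 (by omega) w⟩
  | succ k ih =>
    intro h w
    have h2 : X.δ (k+1) 0 (s (k+1) (k+1) w) = s k (k+1-1) (X.δ k 0 w) :=
      H3 k 0 (k+1) (by omega) (by omega) (by omega) w
    simp only [show k+1-1 = k from rfl] at h2
    simp only [SemiSSet.lastEdge, h2]
    exact ih (by omega) _

/-- Faces `p = N` of the prescribed value of `s_N` on a degenerate simplex. -/
theorem sN_deg_faceN
    (H4 : ∀ (n k : ℕ), k ≤ n → k + 1 ≤ N → ∀ x : X.obj n, X.δ n k (s n k x) = x)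
    (H5 : ∀ (n k : ℕ), k ≤ n → k + 1 ≤ N → ∀ x : X.obj n, X.δ n (k + 1) (s n k x) = x)
    (H6 : ∀ (m i k : ℕ), k + 1 < i → i ≤ m + 2 → k + 1 ≤ N → ∀ x : X.obj (m + 1),
      X.δ (m + 1) i (s (m + 1) k x) = s m k (X.δ m (i - 1) x))
    {n : ℕ} (hn : N ≤ n + 1) (i : ℕ) (z : X.obj n) (hi : i + 1 ≤ N) :
    X.δ (n+1) N (s (n+1) i (s n (N-1) z)) = s n i z := by
  rcases eq_or_lt_of_le hi with hie | hil
  · subst hie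
    simp only [show i+1-1 = i from rfl]
    exact H5 (n+1) i (by omega) (by omega) _
  · rw [H6 n N i (by omega) (by omega) (by omega), H4 n (N-1) (by omega) (by omega)]

/-- Faces `p < N` of the prescribed value of `s_N` on a degenerate simplex. -/
theorem sN_deg_face
    (H3 : ∀ (m i k : ℕ), i < k → k ≤ m + 1 → k + 1 ≤ N → ∀ x : X.obj (m + 1),
      X.δ (m + 1) i (s (m + 1) k x) = s m (k - 1) (X.δ m i x))
    (H4 : ∀ (n k : ℕ), k ≤ n → k + 1 ≤ N → ∀ x : X.obj n, X.δ n k (s n k x) = x)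
    (H5 : ∀ (n k : ℕ), k ≤ n → k + 1 ≤ N → ∀ x : X.obj n, X.δ n (k + 1) (s n k x) = x)
    (H6 : ∀ (m i k : ℕ), k + 1 < i → i ≤ m + 2 → k + 1 ≤ N → ∀ x : X.obj (m + 1),
      X.δ (m + 1) i (s (m + 1) k x) = s m k (X.δ m (i - 1) x))
    (H7 : ∀ (n i k : ℕ), i ≤ k → k ≤ n → k + 2 ≤ N → ∀ x : X.obj n,
      s (n + 1) i (s n k x) = s (n + 1) (k + 1) (s n i x))
    {n : ℕ} (hn : N ≤ n + 1) (i : ℕ) (z : X.obj n) (hi : i + 1 ≤ N) :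
    ∀ p, p < N → X.δ (n+1) p (s (n+1) i (s n (N-1) z)) = s n (N-1) (X.δ n p (s n i z)) := by
  intro p hp
  rcases Nat.lt_trichotomy p i with hpi | rfl | hpi
  · -- p < i
    obtain ⟨l, rfl⟩ : ∃ l, n = l + 1 := ⟨n - 1, by omega⟩
    obtain ⟨K, hN⟩ : ∃ K, N = K + 2 := ⟨N - 2, by omega⟩
    subst hN
    obtain ⟨i', rfl⟩ : ∃ i', i = i' + 1 := ⟨i - 1, by omega⟩
    simp only [show K+2-1 = K+1 from rfl]
    rw [H3 (l+1) p (i'+1) hpi (by omega) (by omega)]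
    simp only [show i'+1-1 = i' from rfl]
    rw [H3 l p (K+1) (by omega) (by omega) (by omega)]
    simp only [show K+1-1 = K from rfl]
    rw [H3 l p (i'+1) hpi (by omega) (by omega)]
    simp only [show i'+1-1 = i' from rfl]
    rw [← H7 l i' K (by omega) (by omega) (by omega)]
  · -- p = i
    rw [H4 (n+1) p (by omega) hi, H4 n p (by omega) hi]
  · -- i < p
    rcases eq_or_lt_of_le (show i + 1 ≤ p from hpi) with hpe | hpl
    · -- p = i + 1
      subst hpe
      rw [H5 (n+1) i (by omega) hi, H5 n i (by omega) hi]
    · -- i + 1 < p < N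
      obtain ⟨l, rfl⟩ : ∃ l, n = l + 1 := ⟨n - 1, by omega⟩
      obtain ⟨K, hN⟩ : ∃ K, N = K + 2 := ⟨N - 2, by omega⟩
      subst hN
      obtain ⟨p', rfl⟩ : ∃ p', p = p' + 1 := ⟨p - 1, by omega⟩
      simp only [show K+2-1 = K+1 from rfl]
      rw [H6 (l+1) (p'+1) i hpl (by omega) (by omega)]
      simp only [show p'+1-1 = p' from rfl]
      rw [H3 l p' (K+1) (by omega) (by omega) (by omega)]
      simp only [show K+1-1 = K from rfl]
      rw [H6 l (p'+1) i hpl (by omega) (by omega)]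
      simp only [show p'+1-1 = p' from rfl]
      rw [← H7 l i K (by omega) (by omega) (by omega)]

/-- The full invariant of the construction `tf`, proved by induction on the degree. -/
theorem tf_inv
    (hX : X.IsQuasiSemicategory)
    (hf : ∀ n, Function.Injective (f.app n))
    (hs0A : ∀ a : A.obj 0, s0 (f.app 0 a) = f.app 1 (SA.s 0 0 a))
    (hends : ∀ x : X.obj 0, X.δ 0 0 (s0 x) = x ∧ X.δ 0 1 (s0 x) = x)
    (hequiv : ∀ x : X.obj 0, X.IsEquivalence (s0 x))
    (H1 : N ≠ 0 → ∀ x : X.obj 0, s 0 0 x = s0 x)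
    (H2 : ∀ (n k : ℕ), k ≤ n → k + 1 ≤ N → ∀ a : A.obj n,
      s n k (f.app n a) = f.app (n + 1) (SA.s n k a))
    (H3 : ∀ (m i k : ℕ), i < k → k ≤ m + 1 → k + 1 ≤ N → ∀ x : X.obj (m + 1),
      X.δ (m + 1) i (s (m + 1) k x) = s m (k - 1) (X.δ m i x))
    (H4 : ∀ (n k : ℕ), k ≤ n → k + 1 ≤ N → ∀ x : X.obj n, X.δ n k (s n k x) = x)
    (H5 : ∀ (n k : ℕ), k ≤ n → k + 1 ≤ N → ∀ x : X.obj n, X.δ n (k + 1) (s n k x) = x)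
    (H6 : ∀ (m i k : ℕ), k + 1 < i → i ≤ m + 2 → k + 1 ≤ N → ∀ x : X.obj (m + 1),
      X.δ (m + 1) i (s (m + 1) k x) = s m k (X.δ m (i - 1) x))
    (H7 : ∀ (n i k : ℕ), i ≤ k → k ≤ n → k + 2 ≤ N → ∀ x : X.obj n,
      s (n + 1) i (s n k x) = s (n + 1) (k + 1) (s n i x)) :
    ∀ n : ℕ,
      (N ≤ n → ∀ y : X.obj n,
        X.δ n N (tf f SA s0 N s n y) = y ∧
        ∀ a : A.obj n, y = f.app n a →
          tf f SA s0 N s n y = f.app (n+1) (SA.s n N a)) ∧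
      (∀ m, n = m + 1 → N ≤ m + 1 → ∀ y : X.obj (m+1),
        (∀ p, p < N →
          X.δ (m+1) p (tf f SA s0 N s (m+1) y) = s m (N-1) (X.δ m p y)) ∧
        (∀ p, N+1 < p → p ≤ m+2 →
          X.δ (m+1) p (tf f SA s0 N s (m+1) y) = tf f SA s0 N s m (X.δ m (p-1) y)) ∧
        (∀ i (z : X.obj m), i + 1 ≤ N → y = s m i z →
          tf f SA s0 N s (m+1) y = s (m+1) i (s m (N-1) z))) := by
  intro n
  induction n with
  | zero =>
    constructor
    · intro hN y
      have hN0 : N = 0 := by omega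
      subst hN0
      have ht : tf f SA s0 0 s 0 y = s0 y := by rw [tf, if_pos rfl]
      refine ⟨by rw [ht]; exact (hends y).1, fun a ha => ?_⟩
      rw [ht, ha, hs0A]
    · intro m hm; exact absurd hm (by omega)
  | succ n ih =>
    have key : N ≤ n + 1 → ∀ y : X.obj (n+1),
        (X.δ (n+1) N (tf f SA s0 N s (n+1) y) = y) ∧
        (∀ a : A.obj (n+1), y = f.app (n+1) a →
          tf f SA s0 N s (n+1) y = f.app (n+2) (SA.s (n+1) N a)) ∧
        (∀ p, p < N →
          X.δ (n+1) p (tf f SA s0 N s (n+1) y) = s n (N-1) (X.δ n p y)) ∧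
        (∀ p, N+1 < p → p ≤ n+2 →
          X.δ (n+1) p (tf f SA s0 N s (n+1) y) = tf f SA s0 N s n (X.δ n (p-1) y)) ∧
        (∀ i (z : X.obj n), i + 1 ≤ N → y = s n i z →
          tf f SA s0 N s (n+1) y = s (n+1) i (s n (N-1) z)) := by
      intro hN y
      by_cases hA : ∃ a, f.app (n+1) a = y
      · -- image of `A`
        have ha₀ : f.app (n+1) hA.choose = y := hA.choose_spec
        set a₀ := hA.choose with ha₀def
        have ht : tf f SA s0 N s (n+1) y = f.app (n+2) (SA.s (n+1) N a₀) := by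
          rw [tf, dif_pos hA]
        refine ⟨?_, ?_, ?_, ?_, ?_⟩
        · rw [ht, ← ha₀, ← f.naturality (n+1) N (by omega),
            SA.δs_self (n+1) N (by omega)]
        · intro a ha
          have haa : a = a₀ := hf (n+1) (by rw [ha₀, ha])
          rw [ht, haa]
        · intro p hp
          rw [ht, ← f.naturality (n+1) p (by omega), SA.δs_lt n p N hp (by omega),
            ← ha₀, ← f.naturality n p (by omega),
            H2 n (N-1) (by omega) (by omega) (A.δ n p a₀)]
        · intro p hp1 hp2
          rw [ht, ← f.naturality (n+1) p (by omega), SA.δs_gt n p N hp1 hp2,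
            ← ha₀, ← f.naturality n (p-1) (by omega)]
          exact ((ih.1 (by omega) (f.app n (A.δ n (p-1) a₀))).2 (A.δ n (p-1) a₀) rfl).symm
        · intro i z hi hyz
          have hb : X.δ n i y = f.app n (A.δ n i a₀) := by
            rw [← ha₀, f.naturality n i (by omega)]
          have hz : z = f.app n (A.δ n i a₀) := by
            have h1 : X.δ n i (s n i z) = z := H4 n i (by omega) hi z
            rw [← h1, ← hyz]; exact hb
          have ha0 : a₀ = SA.s n i (A.δ n i a₀) := by
            apply hf (n+1)
            rw [ha₀, ← H2 n i (by omega) hi (A.δ n i a₀), ← hz]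
            exact hyz
          rw [ht, hz, H2 n (N-1) (by omega) (by omega) (A.δ n i a₀),
            H2 (n+1) i (by omega) hi (SA.s n (N-1) (A.δ n i a₀))]
          congr 1
          rw [SA.ss n i (N-1) (by omega) (by omega) (A.δ n i a₀),
            show N - 1 + 1 = N by omega, ← ha0]
      · by_cases hD : ∃ i, ∃ z : X.obj n, i + 1 ≤ N ∧ s n i z = y
        · -- degenerate simplex
          have hspec := hD.choose_spec.choose_spec
          set i₀ := hD.choose with hi₀def
          set z₀ := hD.choose_spec.choose with hz₀def
          obtain ⟨hi₀, hy₀⟩ := hspec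
          have ht : tf f SA s0 N s (n+1) y = s (n+1) i₀ (s n (N-1) z₀) := by
            rw [tf, dif_neg hA, dif_pos hD]
          have hval : ∀ i (z : X.obj n), i + 1 ≤ N → s n i z = y →
              tf f SA s0 N s (n+1) y = s (n+1) i (s n (N-1) z) := by
            intro i z hi hyz
            rw [ht]
            exact sN_welldef H3 H4 H5 H6 H7 hN i₀ i z₀ z hi₀ hi (by rw [hy₀, hyz])
          refine ⟨?_, ?_, ?_, ?_, ?_⟩
          · rw [ht, ← hy₀]
            exact sN_deg_faceN H4 H5 H6 hN i₀ z₀ hi₀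
          · intro a ha; exact absurd ⟨a, ha.symm⟩ hA
          · intro p hp
            rw [ht, ← hy₀]
            exact sN_deg_face H3 H4 H5 H6 H7 hN i₀ z₀ hi₀ p hp
          · intro p hp1 hp2
            obtain ⟨l, rfl⟩ : ∃ l, n = l + 1 := ⟨n - 1, by omega⟩
            obtain ⟨q, rfl⟩ : ∃ q, p = q + 2 := ⟨p - 2, by omega⟩
            rw [ht, H6 (l+1) (q+2) i₀ (by omega) (by omega) (by omega)]
            simp only [show q+2-1 = q+1 from rfl]
            rw [H6 l (q+1) (N-1) (by omega) (by omega) (by omega)]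
            simp only [show q+1-1 = q from rfl]
            rw [← hy₀, H6 l (q+1) i₀ (by omega) (by omega) (by omega)]
            simp only [show q+1-1 = q from rfl]
            exact ((ih.2 l rfl (by omega) (s l i₀ (X.δ l q z₀))).2.2 i₀
              (X.δ l q z₀) hi₀ rfl).symm
          · intro i z hi hyz
            exact hval i z hi hyz.symm
        · -- generic simplex: fill a horn
          set hface_aux : (j : ℕ) → j ≤ n + 2 → j ≠ N + 1 → X.obj (n+1) := fun j _ _ =>
            if j < N then s n (N-1) (X.δ n j y)
            else if j = N then y
            else tf f SA s0 N s n (X.δ n (j-1) y) with hfdef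
          have fspec1 : ∀ j hj hj', j < N →
              hface_aux j hj hj' = s n (N-1) (X.δ n j y) := by
            intro j _ _ h; simp only [hfdef]; split_ifs <;> first | rfl | omega
          have fspec2 : ∀ hj hj', hface_aux N hj hj' = y := by
            intro _ _; simp only [hfdef]; split_ifs <;> first | rfl | omega
          have fspec3 : ∀ j hj hj', N + 1 < j →
              hface_aux j hj hj' = tf f SA s0 N s n (X.δ n (j-1) y) := by
            intro j _ _ h
            simp only [hfdef]; split_ifs <;> first | rfl | omega
          have compat : X.HornCompat (n+1) (N+1) hface_aux := by
            intro j k hjk hk hj' hk'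
            rcases Nat.lt_trichotomy k N with hkN | hkN | hkN
            · -- j < k < N
              rw [fspec1 k (by omega) (by omega) hkN, fspec1 j (by omega) (by omega) (by omega)]
              obtain ⟨l, rfl⟩ : ∃ l, n = l + 1 := ⟨n - 1, by omega⟩
              rw [H3 l j (N-1) (by omega) (by omega) (by omega),
                H3 l (k-1) (N-1) (by omega) (by omega) (by omega),
                X.δ_comp l j k hjk (by omega)]
            · -- k = N
              subst hkN
              rw [fspec2 (by omega) (by omega), fspec1 j (by omega) (by omega) (by omega), H4 n (k-1) (by omega) (by omega)]
            · -- N < k, so N + 1 < k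
              have hk2 : N + 1 < k := by omega
              rw [fspec3 k (by omega) (by omega) hk2]
              rcases Nat.lt_trichotomy j N with hjN | hjN | hjN
              · -- j < N
                rw [fspec1 j (by omega) (by omega) hjN]
                obtain ⟨l, rfl⟩ : ∃ l, n = l + 1 := ⟨n - 1, by omega⟩
                rw [(ih.2 l rfl (by omega) (X.δ (l+1) (k-1) y)).1 j hjN,
                  X.δ_comp l j (k-1) (by omega) (by omega) y,
                  H6 l (k-1) (N-1) (by omega) (by omega) (by omega)]
              · -- j = N
                subst hjN
                rw [fspec2 (by omega) (by omega), (ih.1 (by omega) (X.δ n (k-1) y)).1]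
              · -- N + 1 < j
                have hj2 : N + 1 < j := by omega
                rw [fspec3 j (by omega) (by omega) hj2]
                obtain ⟨l, rfl⟩ : ∃ l, n = l + 1 := ⟨n - 1, by omega⟩
                rw [(ih.2 l rfl (by omega) (X.δ (l+1) (k-1) y)).2.1 j hj2 (by omega),
                  (ih.2 l rfl (by omega) (X.δ (l+1) (j-1) y)).2.1 (k-1) (by omega)
                    (by omega),
                  X.δ_comp l (j-1) (k-1) (by omega) (by omega) y]
          have hF : ∃ x : X.obj (n+2),
              (∀ p, p < N → X.δ (n+1) p x = s n (N-1) (X.δ n p y)) ∧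
              X.δ (n+1) N x = y ∧
              (∀ p, N+1 < p → p ≤ n+2 →
                X.δ (n+1) p x = tf f SA s0 N s n (X.δ n (p-1) y)) := by
            obtain ⟨x, hx⟩ : ∃ x, X.IsFiller ⟨hface_aux, compat⟩ x := by
              rcases eq_or_lt_of_le hN with hbase | hlt
              · -- N = n + 1 : outer horn, fill using cartesianness of `s0`
                subst hbase
                obtain ⟨v, hv⟩ := lastEdge_s H1 H3 n (by omega) (X.δ n 0 y)
                apply (hequiv v).1 n ⟨hface_aux, compat⟩
                show X.lastEdge n (hface_aux 0 (by omega) (by omega)) = s0 v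
                rw [fspec1 0 (by omega) (by omega) (by omega)]
                simp only [show n+1-1 = n from rfl]
                exact hv
              · exact hX (n+1) (N+1) (by omega) (by omega) ⟨hface_aux, compat⟩
            refine ⟨x, ?_, ?_, ?_⟩
            · intro p hp
              rw [hx p (by omega) (by omega)]
              exact fspec1 p (by omega) (by omega) hp
            · rw [hx N (by omega) (by omega)]
              exact fspec2 (by omega) (by omega)
            · intro p hp1 hp2
              rw [hx p (by omega) (by omega)]
              exact fspec3 p (by omega) (by omega) hp1
          have ht : tf f SA s0 N s (n+1) y = hF.choose := by
            rw [tf, dif_neg hA, dif_neg hD, dif_pos hF]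
          obtain ⟨hFa, hFb, hFc⟩ := hF.choose_spec
          exact ⟨by rw [ht]; exact hFb,
            fun a ha => absurd ⟨a, ha.symm⟩ hA,
            fun p hp => by rw [ht]; exact hFa p hp,
            fun p h1 h2 => by rw [ht]; exact hFc p h1 h2,
            fun i z hi hyz => absurd ⟨i, z, hi, hyz.symm⟩ hD⟩
    refine ⟨fun h y => ⟨(key h y).1, (key h y).2.1⟩, fun m hm => ?_⟩
    obtain rfl : m = n := by omega
    intro h y
    exact ⟨(key h y).2.2.1, (key h y).2.2.2.1, (key h y).2.2.2.2⟩

end Construction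

open SemiSSet in
/-- **Lemma (step 1).** For a quasi-semicategory `X`, a semisimplicial subset
`A ⊆ X` with simplicial structure, and `s₀` an extension of the degree-0
degeneracy of `A` by idempotent self-equivalences: for every `N ≥ 0`, any
`(N−1)`-good system extends to an almost `N`-good system. -/
theorem goodSystemBelow_extends_to_almostGoodSystem
    (X A : SemiSSet.{u}) (hX : X.IsQuasiSemicategory)
    (f : Hom A X) (hf : ∀ n, Function.Injective (f.app n))
    (SA : SimplicialStructure A)
    (s0 : X.obj 0 → X.obj 1)
    (hs0A : ∀ a : A.obj 0, s0 (f.app 0 a) = f.app 1 (SA.s 0 0 a))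
    (hends : ∀ x : X.obj 0, X.δ 0 0 (s0 x) = x ∧ X.δ 0 1 (s0 x) = x)
    (hidem : ∀ x : X.obj 0, X.IsIdempotent (s0 x))
    (hequiv : ∀ x : X.obj 0, X.IsEquivalence (s0 x))
    (N : ℕ) (s : (n : ℕ) → ℕ → X.obj n → X.obj (n + 1))
    (hs : GoodSystemBelow f SA s0 N s) :
    ∃ s' : (n : ℕ) → ℕ → X.obj n → X.obj (n + 1),
      (∀ (n k : ℕ), k ≤ n → k < N → ∀ x : X.obj n, s' n k x = s n k x) ∧
      AlmostGoodSystem f SA s0 N s' := by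
  classical
  have H1 : N ≠ 0 → ∀ x : X.obj 0, s 0 0 x = s0 x := by
    intro hN x
    obtain ⟨M, rfl⟩ : ∃ M, N = M + 1 := ⟨N - 1, by omega⟩
    exact hs.1.1 x
  have H2 : ∀ (n k : ℕ), k ≤ n → k + 1 ≤ N → ∀ a : A.obj n,
      s n k (f.app n a) = f.app (n + 1) (SA.s n k a) := by
    intro n k h1 h2 a
    obtain ⟨M, rfl⟩ : ∃ M, N = M + 1 := ⟨N - 1, by omega⟩
    exact hs.1.2.1 n k h1 (by omega) a
  have H3 : ∀ (m i k : ℕ), i < k → k ≤ m + 1 → k + 1 ≤ N → ∀ x : X.obj (m + 1),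
      X.δ (m + 1) i (s (m + 1) k x) = s m (k - 1) (X.δ m i x) := by
    intro m i k h1 h2 h3 x
    obtain ⟨M, rfl⟩ : ∃ M, N = M + 1 := ⟨N - 1, by omega⟩
    exact hs.1.2.2.1 m i k h1 h2 (by omega) x
  have H4 : ∀ (n k : ℕ), k ≤ n → k + 1 ≤ N → ∀ x : X.obj n, X.δ n k (s n k x) = x := by
    intro n k h1 h2 x
    obtain ⟨M, rfl⟩ : ∃ M, N = M + 1 := ⟨N - 1, by omega⟩
    exact hs.1.2.2.2.1 n k h1 (by omega) x
  have H5 : ∀ (n k : ℕ), k ≤ n → k + 1 ≤ N → ∀ x : X.obj n,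
      X.δ n (k + 1) (s n k x) = x := by
    intro n k h1 h2 x
    obtain ⟨M, rfl⟩ : ∃ M, N = M + 1 := ⟨N - 1, by omega⟩
    rcases Nat.lt_or_ge k M with h | h
    · exact hs.1.2.2.2.2.1 n k h1 h x
    · obtain rfl : k = M := by omega
      exact hs.2 n h1 x
  have H6 : ∀ (m i k : ℕ), k + 1 < i → i ≤ m + 2 → k + 1 ≤ N → ∀ x : X.obj (m + 1),
      X.δ (m + 1) i (s (m + 1) k x) = s m k (X.δ m (i - 1) x) := by
    intro m i k h1 h2 h3 x
    obtain ⟨M, rfl⟩ : ∃ M, N = M + 1 := ⟨N - 1, by omega⟩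
    exact hs.1.2.2.2.2.2.1 m i k h1 h2 (by omega) x
  have H7 : ∀ (n i k : ℕ), i ≤ k → k ≤ n → k + 2 ≤ N → ∀ x : X.obj n,
      s (n + 1) i (s n k x) = s (n + 1) (k + 1) (s n i x) := by
    intro n i k h1 h2 h3 x
    obtain ⟨M, rfl⟩ : ∃ M, N = M + 1 := ⟨N - 1, by omega⟩
    exact hs.1.2.2.2.2.2.2 n i k h1 h2 (by omega) x
  have inv := tf_inv hX hf hs0A hends hequiv H1 H2 H3 H4 H5 H6 H7
  refine ⟨fun n k x => if k = N then tf f SA s0 N s n x else s n k x, ?_, ?_, ?_, ?_, ?_,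
    ?_, ?_, ?_⟩
  · -- restriction to the old system
    intro n k h1 h2 x
    beta_reduce
    rw [if_neg (by omega : ¬ k = N)]
  · -- clause 1 : degree 0 value
    intro x
    by_cases h : (0 : ℕ) = N
    · beta_reduce
      rw [if_pos h]
      obtain rfl : N = 0 := h.symm
      rw [tf, if_pos rfl]
    · beta_reduce
      rw [if_neg h]
      exact H1 (by omega) x
  · -- clause 2 : restriction to A
    intro n k h1 h2 a
    rcases eq_or_lt_of_le h2 with rfl | hlt
    · beta_reduce
      rw [if_pos rfl]
      exact ((inv n).1 h1 (f.app n a)).2 a rfl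
    · beta_reduce
      rw [if_neg (by omega : ¬ k = N)]
      exact H2 n k h1 (by omega) a
  · -- clause 3 : δ_i s_k = s_(k-1) δ_i for i < k
    intro m i k hik hk1 hk2 x
    rcases eq_or_lt_of_le hk2 with rfl | hlt
    · beta_reduce
      rw [if_pos rfl, if_neg (by omega : ¬ k - 1 = k)]
      exact ((inv (m+1)).2 m rfl hk1 x).1 i hik
    · beta_reduce
      rw [if_neg (by omega : ¬ k = N), if_neg (by omega : ¬ k - 1 = N)]
      exact H3 m i k hik hk1 (by omega) x
  · -- clause 4 : δ_k s_k = id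
    intro n k h1 h2 x
    rcases eq_or_lt_of_le h2 with rfl | hlt
    · beta_reduce
      rw [if_pos rfl]
      exact ((inv n).1 h1 x).1
    · beta_reduce
      rw [if_neg (by omega : ¬ k = N)]
      exact H4 n k h1 (by omega) x
  · -- clause 5 : δ_(k+1) s_k = id for k < N
    intro n k h1 h2 x
    beta_reduce
    rw [if_neg (by omega : ¬ k = N)]
    exact H5 n k h1 (by omega) x
  · -- clause 6 : δ_i s_k = s_k δ_(i-1) for i > k+1
    intro m i k h1 h2 h3 x
    rcases eq_or_lt_of_le h3 with rfl | hlt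
    · beta_reduce
      rw [if_pos rfl, if_pos rfl]
      exact ((inv (m+1)).2 m rfl (by omega) x).2.1 i h1 h2
    · beta_reduce
      rw [if_neg (by omega : ¬ k = N), if_neg (by omega : ¬ k = N)]
      exact H6 m i k h1 h2 (by omega) x
  · -- clause 7 : s_i s_k = s_(k+1) s_i for i ≤ k
    intro n i k h1 h2 h3 x
    rcases eq_or_lt_of_le h3 with he | hlt
    · subst he
      beta_reduce
      rw [if_neg (by omega : ¬ i = k + 1), if_neg (by omega : ¬ k = k + 1),
        if_pos rfl, if_neg (by omega : ¬ i = k + 1)]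
      have := ((inv (n+1)).2 n rfl (by omega) (s n i x)).2.2 i x (by omega) rfl
      simp only [show k + 1 - 1 = k from rfl] at this
      exact this.symm
    · beta_reduce
      rw [if_neg (by omega : ¬ i = N), if_neg (by omega : ¬ k = N),
        if_neg (by omega : ¬ k + 1 = N), if_neg (by omega : ¬ i = N)]
      exact H7 n i k h1 h2 (by omega) x
end

section
/- Let X be a quasi-semicategory, A ⊆ X a semisimplicial subset equipped with a simplicial structure, and s₀ : X₀ → X₁ a function extending the degree-0 degeneracy of A and such that each s₀(x) is an idempotent equivalence from x to x. If (s₀, …, s_N) is an almost N-good system on (X, A, s₀), then there exists a collection of maps σ_N : X_n → X_{n+1} (n ≥ N) such that (s₀, …, s_{N−1}, σ_N) is an N-good system. -/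
universe u

namespace SemiSSetAux

open SemiSSet

/-- The elements on which the old `s N` already behaves well: the two relevant
"extra degeneracy" identities hold. -/
def Pdeg (X : SemiSSet.{u}) (N : ℕ)
    (s : (n : ℕ) → ℕ → X.obj n → X.obj (n + 1)) (n : ℕ) (x : X.obj n) : Prop :=
  X.δ n (N + 1) (s n N x) = x ∧
    X.δ (n + 1) (N + 1) (s (n + 1) N (s n N x)) = s n N x

/-- The first vertex of a simplex. -/
def vtx (X : SemiSSet.{u}) : (n : ℕ) → X.obj n → X.obj 0
  | 0, x => x
  | n + 1, x => vtx X n (X.δ n (n + 1) x)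

open Classical in
/-- The correcting `(n+2)`-simplex `τ x`. -/
noncomputable def tauAux (X : SemiSSet.{u}) (N : ℕ)
    (s : (n : ℕ) → ℕ → X.obj n → X.obj (n + 1)) :
    (n : ℕ) → X.obj n → X.obj (n + 2)
  | 0 => fun x =>
      if Pdeg X N s 0 x then s 1 N (s 0 N x)
      else if h : ∃ t : X.obj 2, ∀ j, j ≤ 2 → X.δ 1 j t = s 0 N x then h.choose
      else s 1 0 (s 0 0 x)
  | n + 1 => fun x =>
      if Pdeg X N s (n + 1) x then s (n + 2) N (s (n + 1) N x)
      else if h : ∃ t : X.obj (n + 3),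
          (∀ j, j < N → X.δ (n + 2) j t
              = s (n + 1) (N - 1) (s n (N - 1) (X.δ n j x))) ∧
          X.δ (n + 2) (N + 1) t = s (n + 1) N x ∧
          X.δ (n + 2) (N + 2) t = s (n + 1) N x ∧
          (∀ k, N + 2 < k → k ≤ n + 3 →
              X.δ (n + 2) k t = tauAux X N s n (X.δ n (k - 2) x)) then h.choose
      else s (n + 2) 0 (s (n + 1) 0 x)

end SemiSSetAux

namespace SemiSSetAux

open SemiSSet Classical

variable {X A : SemiSSet.{u}} {f : Hom A X} {SA : SimplicialStructure A}
  {s0 : X.obj 0 → X.obj 1} {N : ℕ} {s : (n : ℕ) → ℕ → X.obj n → X.obj (n + 1)}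

lemma tau_zero (x : X.obj 0) : tauAux X N s 0 x =
    (if Pdeg X N s 0 x then s 1 N (s 0 N x)
      else if h : ∃ t : X.obj 2, ∀ j, j ≤ 2 → X.δ 1 j t = s 0 N x then h.choose
      else s 1 0 (s 0 0 x)) := by
  rw [tauAux]

lemma tau_succ (n : ℕ) (x : X.obj (n + 1)) : tauAux X N s (n + 1) x =
    (if Pdeg X N s (n + 1) x then s (n + 2) N (s (n + 1) N x)
      else if h : ∃ t : X.obj (n + 3),
          (∀ j, j < N → X.δ (n + 2) j t
              = s (n + 1) (N - 1) (s n (N - 1) (X.δ n j x))) ∧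
          X.δ (n + 2) (N + 1) t = s (n + 1) N x ∧
          X.δ (n + 2) (N + 2) t = s (n + 1) N x ∧
          (∀ k, N + 2 < k → k ≤ n + 3 →
              X.δ (n + 2) k t = tauAux X N s n (X.δ n (k - 2) x)) then h.choose
      else s (n + 2) 0 (s (n + 1) 0 x)) := by
  rw [tauAux]

lemma tauP {n : ℕ} {x : X.obj n} (hx : Pdeg X N s n x) :
    tauAux X N s n x = s (n + 1) N (s n N x) := by
  cases n with
  | zero => rw [tau_zero, if_pos hx]
  | succ n => rw [tau_succ, if_pos hx]

end SemiSSetAux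
namespace SemiSSetAux

open SemiSSet Classical

variable {X A : SemiSSet.{u}} {f : Hom A X} {SA : SimplicialStructure A}
  {s0 : X.obj 0 → X.obj 1} {N : ℕ} {s : (n : ℕ) → ℕ → X.obj n → X.obj (n + 1)}

lemma LA (hs : AlmostGoodSystem f SA s0 N s) {n : ℕ} (hn : N ≤ n) (a : A.obj n) :
    X.δ n (N + 1) (s n N (f.app n a)) = f.app n a := by
  rw [hs.2.1 n N hn le_rfl a, ← f.naturality n (N + 1) (by omega), SA.δs_succ n N hn]

lemma PA (hs : AlmostGoodSystem f SA s0 N s) {n : ℕ} (hn : N ≤ n) (a : A.obj n) :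
    Pdeg X N s n (f.app n a) := by
  refine ⟨LA hs hn a, ?_⟩
  rw [hs.2.1 n N hn le_rfl a]
  exact LA hs (by omega) (SA.s n N a)

lemma LD (hs : AlmostGoodSystem f SA s0 N s) {n i : ℕ} (x' : X.obj n)
    (hi : i < N) (hn : N - 1 ≤ n) :
    X.δ (n + 1) (N + 1) (s (n + 1) N (s n i x')) = s n i x' := by
  have e : N - 1 + 1 = N := by omega
  have h7 := hs.2.2.2.2.2.2 n i (N - 1) (by omega) hn (by omega) x'
  rw [e] at h7
  rw [← h7]
  have h6 := hs.2.2.2.2.2.1 n (N + 1) i (by omega) (by omega) (by omega)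
    (s n (N - 1) x')
  simp only [Nat.add_sub_cancel] at h6
  rw [h6]
  have h5 := hs.2.2.2.2.1 n (N - 1) hn (by omega) x'
  rw [e] at h5
  rw [h5]

lemma PD (hs : AlmostGoodSystem f SA s0 N s) {n i : ℕ} (x' : X.obj n)
    (hi : i < N) (hn : N - 1 ≤ n) : Pdeg X N s (n + 1) (s n i x') := by
  refine ⟨LD hs x' hi hn, ?_⟩
  have e : N - 1 + 1 = N := by omega
  have h7 := hs.2.2.2.2.2.2 n i (N - 1) (by omega) hn (by omega) x'
  rw [e] at h7
  rw [← h7]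
  exact LD hs (s n (N - 1) x') hi (by omega)

lemma Ynat (hs : AlmostGoodSystem f SA s0 N s) {n j : ℕ} (hj : N < j)
    (hj2 : j ≤ n + 1) (x : X.obj (n + 1)) :
    X.δ n (N + 1) (s n N (X.δ n j x))
      = X.δ n j (X.δ (n + 1) (N + 1) (s (n + 1) N x)) := by
  have h6 := hs.2.2.2.2.2.1 n (j + 1) N (by omega) (by omega) le_rfl x
  simp only [Nat.add_sub_cancel] at h6
  rw [← h6]
  have hc := X.δ_comp n (N + 1) (j + 1) (by omega) (by omega) (s (n + 1) N x)
  simp only [Nat.add_sub_cancel] at hc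
  exact hc

lemma Pd (hs : AlmostGoodSystem f SA s0 N s) {n j : ℕ} (hj : N < j)
    (hj2 : j ≤ n + 1) {x : X.obj (n + 1)}
    (hx : Pdeg X N s (n + 1) x) : Pdeg X N s n (X.δ n j x) := by
  refine ⟨by rw [Ynat hs hj hj2 x, hx.1], ?_⟩
  have h6 := hs.2.2.2.2.2.1 n (j + 1) N (by omega) (by omega) le_rfl x
  simp only [Nat.add_sub_cancel] at h6
  rw [← h6, Ynat hs (by omega : N < j + 1) (by omega) (s (n + 1) N x), hx.2]

end SemiSSetAux
namespace SemiSSetAux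

open SemiSSet Classical

variable {X A : SemiSSet.{u}} {f : Hom A X} {SA : SimplicialStructure A}
  {s0 : X.obj 0 → X.obj 1} {N : ℕ} {s : (n : ℕ) → ℕ → X.obj n → X.obj (n + 1)}

lemma sigma_zero (hs : AlmostGoodSystem f SA s0 N s)
    (hidem : ∀ x : X.obj 0, X.IsIdempotent (s0 x)) (hN : N = 0)
    (x : X.obj 0) : ∀ j, j ≤ 2 → X.δ 1 j (tauAux X N s 0 x) = s 0 N x := by
  subst hN
  by_cases hP : Pdeg X 0 s 0 x
  · rw [tauP hP]
    intro j hj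
    interval_cases j
    · exact hs.2.2.2.1 1 0 (by omega) (by omega) (s 0 0 x)
    · exact hP.2
    · have h6 := hs.2.2.2.2.2.1 0 2 0 (by omega) (by omega) (by omega) (s 0 0 x)
      rw [h6]
      rw [show (2 : ℕ) - 1 = 1 from rfl, hP.1]
  · have hex : ∃ t : X.obj 2, ∀ j, j ≤ 2 → X.δ 1 j t = s 0 0 x := by
      obtain ⟨w, h0, h1, h2⟩ := hidem x
      refine ⟨w, ?_⟩
      intro j hj
      interval_cases j
      · rw [h0]; exact (hs.1 x).symm
      · rw [h1]; exact (hs.1 x).symm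
      · rw [h2]; exact (hs.1 x).symm
    rw [tau_zero, if_neg hP, dif_pos hex]
    exact hex.choose_spec

def MainProp (X : SemiSSet.{u}) (N : ℕ)
    (s : (n : ℕ) → ℕ → X.obj n → X.obj (n + 1)) (s0 : X.obj 0 → X.obj 1)
    (n : ℕ) : Prop :=
  (N ≤ n → ∀ x : X.obj n,
      X.δ (n + 1) (N + 1) (tauAux X N s n x) = s n N x ∧
      X.δ (n + 1) (N + 2) (tauAux X N s n x) = s n N x ∧
      (Pdeg X N s n x → X.δ (n + 1) N (tauAux X N s n x) = s n N x)) ∧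
  (N = 0 → ∀ x : X.obj n,
      X.firstEdge (n + 1) (tauAux X N s n x) = s0 (vtx X n x)) ∧
  (∀ m, n = m + 1 → N ≤ m + 1 → ∀ x : X.obj (m + 1),
      (∀ j, j < N → X.δ (m + 2) j (tauAux X N s (m + 1) x)
          = s (m + 1) (N - 1) (s m (N - 1) (X.δ m j x))) ∧
      (∀ k, N + 2 < k → k ≤ m + 3 →
          X.δ (m + 2) k (tauAux X N s (m + 1) x)
            = tauAux X N s m (X.δ m (k - 2) x)))

end SemiSSetAux

namespace SemiSSetAux2
open SemiSSet SemiSSetAux Classical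

open Classical in
noncomputable def sNew (X : SemiSSet.{u}) (N : ℕ)
    (s : (n : ℕ) → ℕ → X.obj n → X.obj (n + 1)) :
    (n k : ℕ) → X.obj n → X.obj (n + 1) := fun n k =>
  if k = N then (fun x => X.δ (n + 1) N (tauAux X N s n x)) else s n k

lemma sNew_self {X : SemiSSet.{u}} {N : ℕ}
    {s : (n : ℕ) → ℕ → X.obj n → X.obj (n + 1)} (n : ℕ) (x : X.obj n) :
    sNew X N s n N x = X.δ (n + 1) N (tauAux X N s n x) := by
  simp [sNew]

lemma sNew_ne {X : SemiSSet.{u}} {N : ℕ}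
    {s : (n : ℕ) → ℕ → X.obj n → X.obj (n + 1)} {k : ℕ} (h : ¬ k = N)
    (n : ℕ) (x : X.obj n) : sNew X N s n k x = s n k x := by
  simp [sNew, h]

end SemiSSetAux2
namespace SemiSSetAux

open SemiSSet Classical

variable {X A : SemiSSet.{u}} {f : Hom A X} {SA : SimplicialStructure A}
  {s0 : X.obj 0 → X.obj 1} {N : ℕ} {s : (n : ℕ) → ℕ → X.obj n → X.obj (n + 1)}

lemma main (hX : X.IsQuasiSemicategory) (hs : AlmostGoodSystem f SA s0 N s)
    (hidem : ∀ x : X.obj 0, X.IsIdempotent (s0 x))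
    (hequiv : ∀ x : X.obj 0, X.IsEquivalence (s0 x)) :
    ∀ n, MainProp X N s s0 n := by
  intro n
  induction n with
  | zero =>
    refine ⟨?_, ?_, ?_⟩
    · intro hn x
      have h0 := sigma_zero hs hidem (by omega) x
      exact ⟨h0 (N + 1) (by omega), h0 (N + 2) (by omega), fun _ => h0 N (by omega)⟩
    · intro hN x
      have h0 := sigma_zero hs hidem hN x
      show X.δ 1 2 (tauAux X N s 0 x) = s0 (vtx X 0 x)
      rw [h0 2 (by omega), hN, hs.1 x]
      rfl
    · intro m hm
      exact absurd hm (by omega)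
  | succ n ih =>
    -- existence of the filler with the right faces
    have hex : ∀ x : X.obj (n + 1), N ≤ n + 1 →
        ∃ t : X.obj (n + 3),
          (∀ j, j < N → X.δ (n + 2) j t
              = s (n + 1) (N - 1) (s n (N - 1) (X.δ n j x))) ∧
          X.δ (n + 2) (N + 1) t = s (n + 1) N x ∧
          X.δ (n + 2) (N + 2) t = s (n + 1) N x ∧
          (∀ k, N + 2 < k → k ≤ n + 3 →
              X.δ (n + 2) k t = tauAux X N s n (X.δ n (k - 2) x)) := by
      intro x hn
      set F : ℕ → X.obj (n + 2) := fun j =>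
        if j < N then s (n + 1) (N - 1) (s n (N - 1) (X.δ n j x))
        else if j ≤ N + 2 then s (n + 1) N x
        else tauAux X N s n (X.δ n (j - 2) x) with hF
      have hF1 : ∀ j, j < N → F j = s (n + 1) (N - 1) (s n (N - 1) (X.δ n j x)) := by
        intro j hj; rw [hF]; simp only []; rw [if_pos hj]
      have hF2 : ∀ j, ¬ j < N → j ≤ N + 2 → F j = s (n + 1) N x := by
        intro j hj hj2; rw [hF]; simp only []; rw [if_neg hj, if_pos hj2]
      have hF3 : ∀ j, N + 2 < j → F j = tauAux X N s n (X.δ n (j - 2) x) := by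
        intro j hj; rw [hF]; simp only []
        rw [if_neg (by omega), if_neg (by omega)]
      have hcompat : X.HornCompat (n + 2) N (fun j _ _ => F j) := by
        intro j k hjk hk hj' hk'
        show X.δ (n + 1) j (F k) = X.δ (n + 1) (k - 1) (F j)
        by_cases hjN : j < N
        · rw [hF1 j hjN]
          by_cases hkN : k < N
          · -- case 1 : j < k < N
            rw [hF1 k hkN]
            obtain ⟨m, rfl⟩ : ∃ m, n = m + 1 := ⟨n - 1, by omega⟩
            have e1 := hs.2.2.1 (m + 1) j (N - 1) (by omega) (by omega) (by omega)
              (s (m + 1) (N - 1) (X.δ (m + 1) k x))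
            rw [e1]
            have e2 := hs.2.2.1 m j (N - 1) (by omega) (by omega) (by omega)
              (X.δ (m + 1) k x)
            rw [e2]
            have e3 := X.δ_comp m j k hjk (by omega) x
            rw [e3]
            have e4 := hs.2.2.1 (m + 1) (k - 1) (N - 1) (by omega) (by omega)
              (by omega) (s (m + 1) (N - 1) (X.δ (m + 1) j x))
            rw [e4]
            have e5 := hs.2.2.1 m (k - 1) (N - 1) (by omega) (by omega) (by omega)
              (X.δ (m + 1) j x)
            rw [e5]
          · by_cases hk1 : k = N + 1
            · -- case 2 : j < N, k = N+1
              subst hk1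
              rw [hF2 (N + 1) (by omega) (by omega)]
              rw [hs.2.2.1 n j N hjN (by omega) le_rfl x]
              rw [show N + 1 - 1 = N - 1 + 1 from by omega]
              rw [hs.2.2.2.2.1 (n + 1) (N - 1) (by omega) (by omega)
                (s n (N - 1) (X.δ n j x))]
            · by_cases hk2 : k = N + 2
              · -- case 3 : j < N, k = N+2
                subst hk2
                rw [hF2 (N + 2) (by omega) (by omega)]
                rw [hs.2.2.1 n j N hjN (by omega) le_rfl x]
                rw [show N + 2 - 1 = N + 1 from by omega]
                have h6 := hs.2.2.2.2.2.1 n (N + 1) (N - 1) (by omega) (by omega)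
                  (by omega) (s n (N - 1) (X.δ n j x))
                rw [h6, show N + 1 - 1 = N - 1 + 1 from by omega]
                rw [hs.2.2.2.2.1 n (N - 1) (by omega) (by omega) (X.δ n j x)]
              · -- case 4 : j < N, k > N+2
                have hk3 : N + 2 < k := by omega
                rw [hF3 k hk3]
                obtain ⟨m, rfl⟩ : ∃ m, n = m + 1 := ⟨n - 1, by omega⟩
                have hC1 := (ih.2.2 m rfl (by omega) (X.δ (m + 1) (k - 2) x)).1 j hjN
                rw [hC1]
                have h6a := hs.2.2.2.2.2.1 (m + 1) (k - 1) (N - 1) (by omega)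
                  (by omega) (by omega) (s (m + 1) (N - 1) (X.δ (m + 1) j x))
                rw [h6a, show k - 1 - 1 = k - 2 from by omega]
                have h6b := hs.2.2.2.2.2.1 m (k - 2) (N - 1) (by omega) (by omega)
                  (by omega) (X.δ (m + 1) j x)
                rw [h6b, show k - 2 - 1 = k - 3 from by omega]
                have hc := X.δ_comp m j (k - 2) (by omega) (by omega) x
                rw [hc, show k - 2 - 1 = k - 3 from by omega]
        · by_cases hjA : j = N + 1
          · subst hjA
            by_cases hk2 : k = N + 2
            · -- case 5
              subst hk2
              rw [hF2 (N + 2) (by omega) (by omega), hF2 (N + 1) (by omega) (by omega)]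
              rw [show N + 2 - 1 = N + 1 from by omega]
            · -- case 6 : j = N+1, k > N+2
              have hk3 : N + 2 < k := by omega
              rw [hF3 k hk3, hF2 (N + 1) (by omega) (by omega)]
              have hC2 := (ih.1 (by omega : N ≤ n) (X.δ n (k - 2) x)).1
              rw [hC2]
              have h6 := hs.2.2.2.2.2.1 n (k - 1) N (by omega) (by omega) le_rfl x
              rw [h6, show k - 1 - 1 = k - 2 from by omega]
          · by_cases hjB : j = N + 2
            · -- case 7 : j = N+2, k > N+2
              subst hjB
              have hk3 : N + 2 < k := by omega
              rw [hF3 k hk3, hF2 (N + 2) (by omega) (by omega)]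
              have hC3 := (ih.1 (by omega : N ≤ n) (X.δ n (k - 2) x)).2.1
              rw [hC3]
              have h6 := hs.2.2.2.2.2.1 n (k - 1) N (by omega) (by omega) le_rfl x
              rw [h6, show k - 1 - 1 = k - 2 from by omega]
            · -- case 8 : N+2 < j < k
              have hj3 : N + 2 < j := by omega
              have hk3 : N + 2 < k := by omega
              rw [hF3 k hk3, hF3 j hj3]
              obtain ⟨m, rfl⟩ : ∃ m, n = m + 1 := ⟨n - 1, by omega⟩
              have hC4a := (ih.2.2 m rfl (by omega) (X.δ (m + 1) (k - 2) x)).2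
                j hj3 (by omega)
              rw [hC4a]
              have hC4b := (ih.2.2 m rfl (by omega) (X.δ (m + 1) (j - 2) x)).2
                (k - 1) (by omega) (by omega)
              rw [hC4b]
              have hc := X.δ_comp m (j - 2) (k - 2) (by omega) (by omega) x
              rw [hc, show k - 2 - 1 = k - 1 - 2 from by omega]
      set H : X.Horn (n + 2) N := ⟨fun j _ _ => F j, hcompat⟩ with hH
      have hfill : ∃ t, X.IsFiller H t := by
        rcases Nat.eq_zero_or_pos N with hN0 | hNpos
        · subst hN0
          have hfe : H.firstEdge = s0 (vtx X n (X.δ n (n + 1) x)) := by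
            show X.firstEdge (n + 1) (H.face (n + 3) (by omega) (by omega)) = _
            have hface : H.face (n + 3) (by omega) (by omega)
                = tauAux X 0 s n (X.δ n (n + 1) x) := by
              show F (n + 3) = _
              rw [hF3 (n + 3) (by omega), show n + 3 - 2 = n + 1 from by omega]
            rw [hface]
            exact ih.2.1 rfl (X.δ n (n + 1) x)
          exact (hequiv _).2 (n + 1) H hfe
        · exact hX (n + 2) N hNpos (by omega) H
      obtain ⟨t, ht⟩ := hfill
      refine ⟨t, ?_, ?_, ?_, ?_⟩
      · intro j hj
        rw [ht j (by omega) (by omega)]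
        exact hF1 j hj
      · rw [ht (N + 1) (by omega) (by omega)]
        exact hF2 (N + 1) (by omega) (by omega)
      · rw [ht (N + 2) (by omega) (by omega)]
        exact hF2 (N + 2) (by omega) (by omega)
      · intro k hk1 hk2
        rw [ht k (by omega) (by omega)]
        exact hF3 k hk1
    have tau_spec : ∀ x : X.obj (n + 1), N ≤ n + 1 →
        (∀ j, j < N → X.δ (n + 2) j (tauAux X N s (n + 1) x)
            = s (n + 1) (N - 1) (s n (N - 1) (X.δ n j x))) ∧
        X.δ (n + 2) (N + 1) (tauAux X N s (n + 1) x) = s (n + 1) N x ∧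
        X.δ (n + 2) (N + 2) (tauAux X N s (n + 1) x) = s (n + 1) N x ∧
        (∀ k, N + 2 < k → k ≤ n + 3 →
            X.δ (n + 2) k (tauAux X N s (n + 1) x)
              = tauAux X N s n (X.δ n (k - 2) x)) ∧
        (Pdeg X N s (n + 1) x → X.δ (n + 2) N (tauAux X N s (n + 1) x)
            = s (n + 1) N x) := by
      intro x hn
      by_cases hP : Pdeg X N s (n + 1) x
      · rw [tauP hP]
        refine ⟨?_, hP.2, ?_, ?_, ?_⟩
        · intro j hj
          have e1 := hs.2.2.1 (n + 1) j N hj (by omega) le_rfl (s (n + 1) N x)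
          rw [e1]
          have e2 := hs.2.2.1 n j N hj (by omega) le_rfl x
          rw [e2]
        · have h6 := hs.2.2.2.2.2.1 (n + 1) (N + 2) N (by omega) (by omega) le_rfl
            (s (n + 1) N x)
          rw [h6, show N + 2 - 1 = N + 1 from by omega, hP.1]
        · intro k hk1 hk2
          have h6a := hs.2.2.2.2.2.1 (n + 1) k N (by omega) (by omega) le_rfl
            (s (n + 1) N x)
          rw [h6a]
          have h6b := hs.2.2.2.2.2.1 n (k - 1) N (by omega) (by omega) le_rfl x
          rw [h6b, show k - 1 - 1 = k - 2 from by omega]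
          rw [tauP (Pd hs (show N < k - 2 from by omega) (by omega) hP)]
        · intro _
          exact hs.2.2.2.1 (n + 2) N (by omega) le_rfl (s (n + 1) N x)
      · have h := hex x hn
        rw [tau_succ, if_neg hP, dif_pos h]
        obtain ⟨h1, h2, h3, h4⟩ := h.choose_spec
        exact ⟨h1, h2, h3, h4, fun hPx => absurd hPx hP⟩
    refine ⟨?_, ?_, ?_⟩
    · intro hn x
      obtain ⟨_, h2, h3, _, h5⟩ := tau_spec x hn
      exact ⟨h2, h3, h5⟩
    · intro hN x
      obtain ⟨_, _, _, h4, _⟩ := tau_spec x (by omega)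
      show X.firstEdge (n + 1) (X.δ (n + 2) (n + 3) (tauAux X N s (n + 1) x)) = _
      rw [h4 (n + 3) (by omega) (by omega), show n + 3 - 2 = n + 1 from by omega]
      exact ih.2.1 hN (X.δ n (n + 1) x)
    · intro m hm
      obtain rfl : n = m := by omega
      intro hn x
      obtain ⟨h1, _, _, h4, _⟩ := tau_spec x hn
      exact ⟨h1, h4⟩

end SemiSSetAux
open SemiSSet in
/-- **Lemma (step 2).** For a quasi-semicategory `X`, a semisimplicial subset
`A ⊆ X` with simplicial structure, and `s₀` an extension of the degree-0
degeneracy of `A` by idempotent self-equivalences: if `(s₀, …, s_N)` is an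
almost `N`-good system, then replacing `s_N` by suitable maps
`σ_N : X_n → X_{n+1}` (`n ≥ N`) yields an `N`-good system
`(s₀, …, s_{N−1}, σ_N)`. -/
theorem almostGoodSystem_to_goodSystem
    (X A : SemiSSet.{u}) (hX : X.IsQuasiSemicategory)
    (f : Hom A X) (hf : ∀ n, Function.Injective (f.app n))
    (SA : SimplicialStructure A)
    (s0 : X.obj 0 → X.obj 1)
    (hs0A : ∀ a : A.obj 0, s0 (f.app 0 a) = f.app 1 (SA.s 0 0 a))
    (hends : ∀ x : X.obj 0, X.δ 0 0 (s0 x) = x ∧ X.δ 0 1 (s0 x) = x)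
    (hidem : ∀ x : X.obj 0, X.IsIdempotent (s0 x))
    (hequiv : ∀ x : X.obj 0, X.IsEquivalence (s0 x))
    (N : ℕ) (s : (n : ℕ) → ℕ → X.obj n → X.obj (n + 1))
    (hs : AlmostGoodSystem f SA s0 N s) :
    ∃ s' : (n : ℕ) → ℕ → X.obj n → X.obj (n + 1),
      (∀ (n k : ℕ), k ≤ n → k < N → ∀ x : X.obj n, s' n k x = s n k x) ∧
      GoodSystem f SA s0 N s' := by

  classical
  have M := SemiSSetAux.main (f := f) (SA := SA) (s0 := s0) hX hs hidem hequiv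
  have hC2 : ∀ n, N ≤ n → ∀ x : X.obj n,
      X.δ (n + 1) (N + 1) (SemiSSetAux.tauAux X N s n x) = s n N x :=
    fun n hn x => ((M n).1 hn x).1
  have hC3 : ∀ n, N ≤ n → ∀ x : X.obj n,
      X.δ (n + 1) (N + 2) (SemiSSetAux.tauAux X N s n x) = s n N x :=
    fun n hn x => ((M n).1 hn x).2.1
  have hC5 : ∀ n, N ≤ n → ∀ x : X.obj n, SemiSSetAux.Pdeg X N s n x →
      X.δ (n + 1) N (SemiSSetAux.tauAux X N s n x) = s n N x :=
    fun n hn x hP => ((M n).1 hn x).2.2 hP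
  have hC1 : ∀ m, N ≤ m + 1 → ∀ x : X.obj (m + 1), ∀ j, j < N →
      X.δ (m + 2) j (SemiSSetAux.tauAux X N s (m + 1) x)
        = s (m + 1) (N - 1) (s m (N - 1) (X.δ m j x)) :=
    fun m h x => ((M (m + 1)).2.2 m rfl h x).1
  have hC4 : ∀ m, N ≤ m + 1 → ∀ x : X.obj (m + 1), ∀ k, N + 2 < k → k ≤ m + 3 →
      X.δ (m + 2) k (SemiSSetAux.tauAux X N s (m + 1) x)
        = SemiSSetAux.tauAux X N s m (X.δ m (k - 2) x) :=
    fun m h x => ((M (m + 1)).2.2 m rfl h x).2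
  have hsig2 : ∀ n, N ≤ n → ∀ x : X.obj n,
      X.δ n N (X.δ (n + 1) N (SemiSSetAux.tauAux X N s n x)) = x := by
    intro n hn x
    have hc := X.δ_comp n N (N + 1) (by omega) (by omega)
      (SemiSSetAux.tauAux X N s n x)
    rw [show N + 1 - 1 = N from by omega] at hc
    rw [← hc, hC2 n hn x, hs.2.2.2.1 n N hn le_rfl x]
  have hsig3 : ∀ n, N ≤ n → ∀ x : X.obj n,
      X.δ n (N + 1) (X.δ (n + 1) N (SemiSSetAux.tauAux X N s n x)) = x := by
    intro n hn x
    have hc := X.δ_comp n N (N + 2) (by omega) (by omega)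
      (SemiSSetAux.tauAux X N s n x)
    rw [show N + 2 - 1 = N + 1 from by omega] at hc
    rw [← hc, hC3 n hn x, hs.2.2.2.1 n N hn le_rfl x]
  refine ⟨SemiSSetAux2.sNew X N s, ?_, ⟨?_, ?_, ?_, ?_, ?_, ?_, ?_⟩, ?_⟩
  · -- agrees with s below N
    intro n k hkn hkN x
    exact SemiSSetAux2.sNew_ne (by omega) n x
  · -- (1) degree 0
    intro x
    by_cases hN : N = 0
    · subst hN
      rw [SemiSSetAux2.sNew_self 0 x,
        SemiSSetAux.sigma_zero hs hidem rfl x 0 (by omega)]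
      exact hs.1 x
    · rw [SemiSSetAux2.sNew_ne (by omega) 0 x]
      exact hs.1 x
  · -- (2) restriction to A
    intro n k hkn hkN a
    by_cases hk : k = N
    · rw [hk, SemiSSetAux2.sNew_self n (f.app n a)]
      rw [hC5 n (by omega) (f.app n a) (SemiSSetAux.PA hs (by omega) a),
        hs.2.1 n N (by omega) le_rfl a]
    · rw [SemiSSetAux2.sNew_ne hk n (f.app n a)]
      exact hs.2.1 n k hkn hkN a
  · -- (3) δ_i s_k, i < k
    intro m i k hik hk hkN x
    by_cases hkn : k = N
    · rw [hkn, SemiSSetAux2.sNew_self (m + 1) x,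
        SemiSSetAux2.sNew_ne (by omega : ¬ N - 1 = N) m (X.δ m i x)]
      have hc := X.δ_comp (m + 1) i N (by omega) (by omega)
        (SemiSSetAux.tauAux X N s (m + 1) x)
      rw [hc, hC1 m (by omega) x i (by omega),
        hs.2.2.2.1 (m + 1) (N - 1) (by omega) (by omega) (s m (N - 1) (X.δ m i x))]
    · rw [SemiSSetAux2.sNew_ne hkn (m + 1) x,
        SemiSSetAux2.sNew_ne (by omega : ¬ k - 1 = N) m (X.δ m i x)]
      exact hs.2.2.1 m i k hik hk (by omega) x
  · -- (4) δ_k s_k = id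
    intro n k hkn hkN x
    by_cases hk : k = N
    · rw [hk, SemiSSetAux2.sNew_self n x]
      exact hsig2 n (by omega) x
    · rw [SemiSSetAux2.sNew_ne hk n x]
      exact hs.2.2.2.1 n k hkn hkN x
  · -- (5) δ_{k+1} s_k = id for k < N
    intro n k hkn hkN x
    rw [SemiSSetAux2.sNew_ne (by omega) n x]
    exact hs.2.2.2.2.1 n k hkn hkN x
  · -- (6) δ_i s_k, i > k+1
    intro m i k hik hi hkN x
    by_cases hk : k = N
    · rw [hk, SemiSSetAux2.sNew_self (m + 1) x,
        SemiSSetAux2.sNew_self m (X.δ m (i - 1) x)]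
      have hc := X.δ_comp (m + 1) N (i + 1) (by omega) (by omega)
        (SemiSSetAux.tauAux X N s (m + 1) x)
      rw [show i + 1 - 1 = i from by omega] at hc
      rw [← hc, hC4 m (by omega) x (i + 1) (by omega) (by omega),
        show i + 1 - 2 = i - 1 from by omega]
    · rw [SemiSSetAux2.sNew_ne hk (m + 1) x,
        SemiSSetAux2.sNew_ne hk m (X.δ m (i - 1) x)]
      exact hs.2.2.2.2.2.1 m i k hik hi (by omega) x
  · -- (7) s_i s_k
    intro n i k hik hkn hkN1 x
    by_cases hkk : k + 1 = N
    · rw [SemiSSetAux2.sNew_ne (by omega : ¬ k = N) n x,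
        SemiSSetAux2.sNew_ne (by omega : ¬ i = N) (n + 1) (s n k x),
        SemiSSetAux2.sNew_ne (by omega : ¬ i = N) n x,
        hkk, SemiSSetAux2.sNew_self (n + 1) (s n i x)]
      rw [hC5 (n + 1) (by omega) (s n i x)
        (SemiSSetAux.PD hs x (by omega) (by omega))]
      have h7 := hs.2.2.2.2.2.2 n i k hik hkn (by omega) x
      rw [hkk] at h7
      exact h7
    · rw [SemiSSetAux2.sNew_ne (by omega : ¬ k = N) n x,
        SemiSSetAux2.sNew_ne (by omega : ¬ i = N) (n + 1) (s n k x),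
        SemiSSetAux2.sNew_ne (by omega : ¬ i = N) n x,
        SemiSSetAux2.sNew_ne hkk (n + 1) (s n i x)]
      exact hs.2.2.2.2.2.2 n i k hik hkn hkN1 x
  · -- the extra identity
    intro n hn x
    rw [SemiSSetAux2.sNew_self n x]
    exact hsig3 n hn x
end

section
/- Let X be a quasi-semicategory, A ⊆ X a semisimplicial subset equipped with a simplicial structure, s₀ : X₀ → X₁ a function extending the degree-0 degeneracy of A, and let (s₀, …, s_{N−1}) be an (N−1)-good system on (X, A, s₀). Then for all i < j < N and all n, the commutative square of sets with top map s_{j−1} : X_{n−2} → X_{n−1}, left map s_i : X_{n−2} → X_{n−1}, right map s_i : X_{n−1} → X_n, and bottom map s_j : X_{n−1} → X_n is a pullback square; and for all k < N and all n, the commutative square with top map the inclusion f : A_{n−1} → X_{n−1}, left map s_k : A_{n−1} → A_n, right map s_k : X_{n−1} → X_n, and bottom map the inclusion f : A_n → X_n is a pullback square. -/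
universe u

open SemiSSet in
/-- **Lemma (pull-back property).** In an `(N−1)`-good system on a
quasi-semicategory `X` with semisimplicial subset `A ⊆ X`, the squares
`s_{j-1} / s_i / s_i / s_j` (for `i < j < N`) and `f / s_k / s_k / f`
(for `k < N`) are pullback squares of sets. -/
theorem goodSystem_pullback_squares
    (X A : SemiSSet.{u}) (hX : X.IsQuasiSemicategory)
    (f : Hom A X) (hf : ∀ n, Function.Injective (f.app n))
    (SA : SimplicialStructure A)
    (s0 : X.obj 0 → X.obj 1)
    (hs0A : ∀ a : A.obj 0, s0 (f.app 0 a) = f.app 1 (SA.s 0 0 a))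
    (N : ℕ) (s : (n : ℕ) → ℕ → X.obj n → X.obj (n + 1))
    (hs : GoodSystemBelow f SA s0 N s) :
    (∀ (i j n : ℕ), i < j → j < N → j ≤ n + 1 →
      ∀ (u v : X.obj (n + 1)), s (n + 1) i u = s (n + 1) j v →
        ∃! z : X.obj n, s n (j - 1) z = u ∧ s n i z = v) ∧
    (∀ (k n : ℕ), k < N → k ≤ n →
      ∀ (u : X.obj n) (v : A.obj (n + 1)), s n k u = f.app (n + 1) v →
        ∃! z : A.obj n, f.app n z = u ∧ SA.s n k z = v) := by
  obtain _ | M := N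
  · exact ⟨fun i j n _ hj => absurd hj (Nat.not_lt_zero j),
           fun k n hk => absurd hk (Nat.not_lt_zero k)⟩
  obtain ⟨⟨h0, hA, hlt, hself, hsucc, hgt, hss⟩, hextra⟩ := hs
  have hsucc' : ∀ (n k : ℕ), k ≤ n → k ≤ M → ∀ x : X.obj n,
      X.δ n (k + 1) (s n k x) = x := by
    intro n k hkn hkM x
    rcases lt_or_eq_of_le hkM with h | rfl
    · exact hsucc n k hkn h x
    · exact hextra n hkn x
  constructor
  · intro i j n hij hjN hjn u v huv
    have hjM : j ≤ M := Nat.lt_succ_iff.mp hjN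
    have hiM : i ≤ M := by omega
    have hin : i ≤ n := by omega
    -- v = s i (δ j u)
    have hv : v = s n i (X.δ n j u) := by
      have h1 : X.δ (n + 1) (j + 1) (s (n + 1) j v) = v :=
        hsucc' (n + 1) j (by omega) hjM v
      have h2 : X.δ (n + 1) (j + 1) (s (n + 1) i u) = s n i (X.δ n (j + 1 - 1) u) :=
        hgt n (j + 1) i (by omega) (by omega) (by omega) u
      rw [huv, h1] at h2
      simpa using h2
    -- u = s (j-1) (δ i v)
    have hu : u = s n (j - 1) (X.δ n i v) := by
      have h1 : X.δ (n + 1) i (s (n + 1) j v) = s n (j - 1) (X.δ n i v) :=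
        hlt n i j hij (by omega) hjM v
      rw [← huv, hself (n + 1) i (by omega) hiM u] at h1
      exact h1
    have hdiv : X.δ n i v = X.δ n j u := by
      conv_lhs => rw [hv]
      exact hself n i hin hiM _
    refine ⟨X.δ n i v, ⟨hu.symm, ?_⟩, ?_⟩
    · rw [hdiv]; exact hv.symm
    · rintro z ⟨hz1, hz2⟩
      rw [← hz2, hself n i hin hiM z]
  · intro k n hkN hkn u v huv
    have hkM : k ≤ M := Nat.lt_succ_iff.mp hkN
    refine ⟨A.δ n k v, ⟨?_, ?_⟩, ?_⟩
    · rw [f.naturality n k (by omega) v, ← huv, hself n k hkn hkM u]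
    · apply hf (n + 1)
      rw [← hA n k hkn hkM (A.δ n k v), f.naturality n k (by omega) v, ← huv,
        hself n k hkn hkM u, huv]
    · rintro z ⟨hz1, hz2⟩
      rw [← hz2, SA.δs_self n k hkn z]
end

section
/- Let X be a semisimplicial set satisfying the Kan condition. Then every vertex x ∈ X₀ admits an idempotent edge f : x → x, i.e., an edge f with d₀f = d₁f = x and f ∘ f ≃ f. -/
universe u

open SemiSSet in
lemma compat2 (X : SemiSSet.{u}) (e : X.obj 1) :
    X.HornCompat 1 2 (fun _ _ _ => e) := by
  intro j k hjk hk hj' hk'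
  simp only [Nat.zero_add] at hk
  obtain rfl : j = 0 := by omega
  obtain rfl : k = 1 := by omega
  rfl

open SemiSSet in
lemma compat3 (X : SemiSSet.{u}) (σ : X.obj 2) (h : X.δ 1 0 σ = X.δ 1 1 σ) :
    X.HornCompat 2 3 (fun _ _ _ => σ) := by
  intro j k hjk hk hj' hk'
  have hk3 : k ≤ 3 := by simpa using hk
  have hk1 : 1 ≤ k := by omega
  have hk2 : k ≤ 2 := by omega
  interval_cases k <;> interval_cases j <;> simp [h]

open SemiSSet in
/-- In a semisimplicial set satisfying the Kan condition, every vertex admits an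
idempotent edge `f : x → x`. -/
theorem kan_exists_idempotent (X : SemiSSet.{u}) (hX : X.KanCondition)
    (x : X.obj 0) :
    ∃ f : X.obj 1, X.δ 0 0 f = x ∧ X.δ 0 1 f = x ∧ X.IsIdempotent f := by
  -- Step 1: an edge `e` with `d₁ e = x`.
  obtain ⟨e, he⟩ := hX 0 0 (by omega) ⟨fun _ _ _ => x, trivial⟩
  have he1 : X.δ 0 1 e = x := he 1 (by omega) (by omega)
  -- Step 2: fill the horn `Λ²₂` with faces `(e, e)` to obtain `σ`,
  -- whose face `f := d₂ σ` is an endo-edge at `x`.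
  obtain ⟨σ, hσ⟩ := hX 1 2 (by omega) ⟨fun _ _ _ => e, compat2 X e⟩
  have hσ0 : X.δ 1 0 σ = e := hσ 0 (by omega) (by omega)
  have hσ1 : X.δ 1 1 σ = e := hσ 1 (by omega) (by omega)
  set f := X.δ 1 2 σ with hf
  have hf0 : X.δ 0 0 f = x := by
    rw [hf, X.δ_comp 0 0 2 (by omega) (by omega), hσ0, he1]
  have hf1 : X.δ 0 1 f = x := by
    rw [hf, X.δ_comp 0 1 2 (by omega) (by omega), hσ1, he1]
  -- Step 3: fill the horn `Λ³₃` with all three faces `σ`; the last face of the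
  -- filler is a `2`-simplex all of whose faces are `f`.
  obtain ⟨w, hw⟩ := hX 2 3 (by omega)
    ⟨fun _ _ _ => σ, compat3 X σ (by rw [hσ0, hσ1])⟩
  have hw0 : X.δ 2 0 w = σ := hw 0 (by omega) (by omega)
  have hw1 : X.δ 2 1 w = σ := hw 1 (by omega) (by omega)
  have hw2 : X.δ 2 2 w = σ := hw 2 (by omega) (by omega)
  refine ⟨f, hf0, hf1, X.δ 2 3 w, ?_, ?_, ?_⟩
  · rw [X.δ_comp 1 0 3 (by omega) (by omega), hw0]
  · rw [X.δ_comp 1 1 3 (by omega) (by omega), hw1]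
  · rw [X.δ_comp 1 2 3 (by omega) (by omega), hw2]
end
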